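/- arXiv:2304.05702 — 4 statements merged into one kernel-verified Lean document; each statement's English description precedes it below -/
import Mathlib

section
/- For a section η = F(ξ, ξ̄) with σ = −∂ξF̄ and ρ = ε + iλ = (1+ξξ̄)² ∂ξ(F(1+ξξ̄)^{-2}), the identity −(1+ξξ̄)² ∂ξ[σ̄ (1+ξξ̄)^{-2}] = ∂ξ̄ ρ + 2F(1+ξξ̄)^{-2} holds for any smooth F. -/
noncomputable section

/-- The Wirtinger derivative `∂/∂ξ` of an `ℝ`-differentiable function `f : ℂ → ℂ`. -/
def wd (f : ℂ → ℂ) (z : ℂ) : ℂ :=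
  (1 / 2) * (fderiv ℝ f z 1 - Complex.I * fderiv ℝ f z Complex.I)

/-- The Wirtinger derivative `∂/∂ξ̄` of an `ℝ`-differentiable function `f : ℂ → ℂ`. -/
def wdbar (f : ℂ → ℂ) (z : ℂ) : ℂ :=
  (1 / 2) * (fderiv ℝ f z 1 + Complex.I * fderiv ℝ f z Complex.I)

namespace WirtingerAux

variable {f g : ℂ → ℂ} {z : ℂ}

lemma wd_const (c : ℂ) : wd (fun _ => c) z = 0 := by simp [wd]

lemma wdbar_const (c : ℂ) : wdbar (fun _ => c) z = 0 := by simp [wdbar]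

lemma wd_add (hf : DifferentiableAt ℝ f z) (hg : DifferentiableAt ℝ g z) :
    wd (fun w => f w + g w) z = wd f z + wd g z := by
  simp [wd, fderiv_fun_add hf hg]; ring

lemma wdbar_add (hf : DifferentiableAt ℝ f z) (hg : DifferentiableAt ℝ g z) :
    wdbar (fun w => f w + g w) z = wdbar f z + wdbar g z := by
  simp [wdbar, fderiv_fun_add hf hg]; ring

lemma wd_neg : wd (fun w => -(f w)) z = -wd f z := by
  simp [wd, fderiv_neg]; ring

lemma wdbar_neg : wdbar (fun w => -(f w)) z = -wdbar f z := by
  simp [wdbar, fderiv_neg]; ring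

lemma wd_sub (hf : DifferentiableAt ℝ f z) (hg : DifferentiableAt ℝ g z) :
    wd (fun w => f w - g w) z = wd f z - wd g z := by
  simp [wd, fderiv_fun_sub hf hg]; ring

lemma wdbar_sub (hf : DifferentiableAt ℝ f z) (hg : DifferentiableAt ℝ g z) :
    wdbar (fun w => f w - g w) z = wdbar f z - wdbar g z := by
  simp [wdbar, fderiv_fun_sub hf hg]; ring

lemma wd_mul (hf : DifferentiableAt ℝ f z) (hg : DifferentiableAt ℝ g z) :
    wd (fun w => f w * g w) z = wd f z * g z + f z * wd g z := by
  simp [wd, fderiv_fun_mul hf hg, smul_eq_mul]; ring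

lemma wdbar_mul (hf : DifferentiableAt ℝ f z) (hg : DifferentiableAt ℝ g z) :
    wdbar (fun w => f w * g w) z = wdbar f z * g z + f z * wdbar g z := by
  simp [wdbar, fderiv_fun_mul hf hg, smul_eq_mul]; ring

lemma wd_const_mul (c : ℂ) (hf : DifferentiableAt ℝ f z) :
    wd (fun w => c * f w) z = c * wd f z := by
  have := wd_mul (f := fun _ => c) (g := f) (z := z) (differentiableAt_const c) hf
  simpa [wd_const] using this

lemma wdbar_const_mul (c : ℂ) (hf : DifferentiableAt ℝ f z) :
    wdbar (fun w => c * f w) z = c * wdbar f z := by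
  have := wdbar_mul (f := fun _ => c) (g := f) (z := z) (differentiableAt_const c) hf
  simpa [wdbar_const] using this

lemma wd_id : wd (fun w => w) z = 1 := by
  rw [wd, fderiv_id']
  simp [Complex.I_mul_I]
  norm_num

lemma wdbar_id : wdbar (fun w => w) z = 0 := by
  rw [wdbar, fderiv_id']
  simp [Complex.I_mul_I]

lemma fderiv_conj_eq (hf : DifferentiableAt ℝ f z) :
    fderiv ℝ (fun w => (starRingEnd ℂ) (f w)) z =
      (Complex.conjCLE.toContinuousLinearMap).comp (fderiv ℝ f z) :=
  (Complex.conjCLE.toContinuousLinearMap.hasFDerivAt.comp z hf.hasFDerivAt).fderiv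

lemma wd_conj_comp (hf : DifferentiableAt ℝ f z) :
    wd (fun w => (starRingEnd ℂ) (f w)) z = (starRingEnd ℂ) (wdbar f z) := by
  rw [wd, wdbar, fderiv_conj_eq hf]
  simp [map_add, map_mul, Complex.conj_I, map_ofNat]
  ring

lemma wdbar_conj_comp (hf : DifferentiableAt ℝ f z) :
    wdbar (fun w => (starRingEnd ℂ) (f w)) z = (starRingEnd ℂ) (wd f z) := by
  rw [wdbar, wd, fderiv_conj_eq hf]
  simp [map_sub, map_mul, Complex.conj_I, map_ofNat]

lemma conj_differentiable : Differentiable ℝ (fun w : ℂ => (starRingEnd ℂ) w) :=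
  Complex.conjCLE.differentiable

lemma wd_conj_id : wd (fun w : ℂ => (starRingEnd ℂ) w) z = 0 := by
  have := wd_conj_comp (f := fun w => w) (z := z) differentiableAt_fun_id
  simpa [wdbar_id] using this

lemma wdbar_conj_id : wdbar (fun w : ℂ => (starRingEnd ℂ) w) z = 1 := by
  have := wdbar_conj_comp (f := fun w => w) (z := z) differentiableAt_fun_id
  simpa [wd_id] using this

lemma wd_inv (hf : Differentiable ℝ f) (h0 : ∀ w, f w ≠ 0) :
    wd (fun w => (f w)⁻¹) z = -wd f z / f z ^ 2 := by
  have hinv : DifferentiableAt ℝ (fun w => (f w)⁻¹) z := (hf z).inv (h0 z)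
  have h1 : (fun w => f w * (f w)⁻¹) = fun _ : ℂ => (1 : ℂ) :=
    funext fun w => mul_inv_cancel₀ (h0 w)
  have h2 := wd_mul (hf z) hinv
  rw [h1, wd_const] at h2
  have hfz := h0 z
  field_simp at h2 ⊢
  linear_combination -h2

lemma wdbar_inv (hf : Differentiable ℝ f) (h0 : ∀ w, f w ≠ 0) :
    wdbar (fun w => (f w)⁻¹) z = -wdbar f z / f z ^ 2 := by
  have hinv : DifferentiableAt ℝ (fun w => (f w)⁻¹) z := (hf z).inv (h0 z)
  have h1 : (fun w => f w * (f w)⁻¹) = fun _ : ℂ => (1 : ℂ) :=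
    funext fun w => mul_inv_cancel₀ (h0 w)
  have h2 := wdbar_mul (hf z) hinv
  rw [h1, wdbar_const] at h2
  have hfz := h0 z
  field_simp at h2 ⊢
  linear_combination -h2

lemma wd_div_sq {q : ℂ → ℂ} (hf : DifferentiableAt ℝ f z)
    (hqd : Differentiable ℝ q) (h0 : ∀ w, q w ≠ 0) :
    wd (fun w => f w * (q w * q w)⁻¹) z =
      wd f z / q z ^ 2 - 2 * wd q z * f z / q z ^ 3 := by
  have hQd : Differentiable ℝ (fun w => q w * q w) := hqd.mul hqd
  have hQ0 : ∀ w, q w * q w ≠ 0 := fun w => mul_ne_zero (h0 w) (h0 w)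
  have hQinv : DifferentiableAt ℝ (fun w => (q w * q w)⁻¹) z := (hQd z).inv (hQ0 z)
  have e1 : wd (fun w => f w * (q w * q w)⁻¹) z
      = wd f z * (q z * q z)⁻¹ + f z * wd (fun w => (q w * q w)⁻¹) z := wd_mul hf hQinv
  have e2 : wd (fun w => (q w * q w)⁻¹) z
      = -(wd (fun w => q w * q w) z) / (q z * q z) ^ 2 := wd_inv hQd hQ0
  have e3 : wd (fun w => q w * q w) z = wd q z * q z + q z * wd q z := wd_mul (hqd z) (hqd z)
  rw [e1, e2, e3]
  have := h0 z
  field_simp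
  ring

lemma wdbar_div_sq {q : ℂ → ℂ} (hf : DifferentiableAt ℝ f z)
    (hqd : Differentiable ℝ q) (h0 : ∀ w, q w ≠ 0) :
    wdbar (fun w => f w * (q w * q w)⁻¹) z =
      wdbar f z / q z ^ 2 - 2 * wdbar q z * f z / q z ^ 3 := by
  have hQd : Differentiable ℝ (fun w => q w * q w) := hqd.mul hqd
  have hQ0 : ∀ w, q w * q w ≠ 0 := fun w => mul_ne_zero (h0 w) (h0 w)
  have hQinv : DifferentiableAt ℝ (fun w => (q w * q w)⁻¹) z := (hQd z).inv (hQ0 z)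
  have e1 : wdbar (fun w => f w * (q w * q w)⁻¹) z
      = wdbar f z * (q z * q z)⁻¹ + f z * wdbar (fun w => (q w * q w)⁻¹) z := wdbar_mul hf hQinv
  have e2 : wdbar (fun w => (q w * q w)⁻¹) z
      = -(wdbar (fun w => q w * q w) z) / (q z * q z) ^ 2 := wdbar_inv hQd hQ0
  have e3 : wdbar (fun w => q w * q w) z = wdbar q z * q z + q z * wdbar q z :=
    wdbar_mul (hqd z) (hqd z)
  rw [e1, e2, e3]
  have := h0 z
  field_simp
  ring

end WirtingerAux

open WirtingerAux Complex in
/-- For a section `η = F(ξ,ξ̄)` with shear `σ = −∂F̄` and `ρ = (1+ξξ̄)² ∂(F(1+ξξ̄)^{-2})`,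
the identity `−(1+ξξ̄)² ∂[σ̄(1+ξξ̄)^{-2}] = ∂̄ρ + 2F(1+ξξ̄)^{-2}` holds. -/
theorem shear_rho_identity (F : ℂ → ℂ) (hF : ContDiff ℝ (⊤ : ℕ∞) F) (σ ρ : ℂ → ℂ)
    (hσ : ∀ z, σ z = -wd (fun w => (starRingEnd ℂ) (F w)) z)
    (hρ : ∀ z, ρ z =
      (((1 + Complex.normSq z) : ℝ) : ℂ) ^ 2 *
        wd (fun w => F w / (((1 + Complex.normSq w) : ℝ) : ℂ) ^ 2) z) :
    ∀ ξ : ℂ,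
      -(((1 + Complex.normSq ξ) : ℝ) : ℂ) ^ 2 *
          wd (fun w => (starRingEnd ℂ) (σ w) / (((1 + Complex.normSq w) : ℝ) : ℂ) ^ 2) ξ =
        wdbar ρ ξ + 2 * F ξ / (((1 + Complex.normSq ξ) : ℝ) : ℂ) ^ 2 := by
  intro ξ
  have hFd : Differentiable ℝ F := hF.differentiable (by simp)
  set q : ℂ → ℂ := fun w => (((1 + Complex.normSq w) : ℝ) : ℂ) with hqdef
  have hq0 : ∀ w : ℂ, q w ≠ 0 := fun w => by
    simp only [hqdef]
    have hn := Complex.normSq_nonneg w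
    exact_mod_cast Complex.ofReal_ne_zero.mpr (by linarith)
  have hq_eq : q = fun w => 1 + w * (starRingEnd ℂ) w := funext fun w => by
    simp only [hqdef]
    push_cast
    rw [Complex.mul_conj]
  have hqd : Differentiable ℝ q := by
    rw [hq_eq]
    exact (differentiable_const 1).add (differentiable_fun_id.mul conj_differentiable)
  have hwdq : ∀ w, wd q w = (starRingEnd ℂ) w := by
    intro w
    rw [hq_eq]
    have e1 : wd (fun w : ℂ => 1 + w * (starRingEnd ℂ) w) w
        = wd (fun _ : ℂ => (1:ℂ)) w + wd (fun w : ℂ => w * (starRingEnd ℂ) w) w :=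
      wd_add (differentiableAt_const 1) (differentiableAt_fun_id.mul (conj_differentiable w))
    have e2 : wd (fun w : ℂ => w * (starRingEnd ℂ) w) w
        = wd (fun w : ℂ => w) w * (starRingEnd ℂ) w + w * wd (fun w : ℂ => (starRingEnd ℂ) w) w :=
      wd_mul differentiableAt_fun_id (conj_differentiable w)
    rw [e1, e2, wd_const, wd_id, wd_conj_id]; ring
  have hwdbarq : ∀ w, wdbar q w = w := by
    intro w
    rw [hq_eq]
    have e1 : wdbar (fun w : ℂ => 1 + w * (starRingEnd ℂ) w) w
        = wdbar (fun _ : ℂ => (1:ℂ)) w + wdbar (fun w : ℂ => w * (starRingEnd ℂ) w) w :=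
      wdbar_add (differentiableAt_const 1) (differentiableAt_fun_id.mul (conj_differentiable w))
    have e2 : wdbar (fun w : ℂ => w * (starRingEnd ℂ) w) w
        = wdbar (fun w : ℂ => w) w * (starRingEnd ℂ) w
          + w * wdbar (fun w : ℂ => (starRingEnd ℂ) w) w :=
      wdbar_mul differentiableAt_fun_id (conj_differentiable w)
    rw [e1, e2, wdbar_const, wdbar_id, wdbar_conj_id]; ring
  -- conj σ = - wdbar F
  have hσc : ∀ w, (starRingEnd ℂ) (σ w) = -(wdbar F w) := by
    intro w
    rw [hσ w, map_neg, wd_conj_comp (hFd w)]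
    simp
  -- differentiability of wd F and wdbar F
  have hAd : Differentiable ℝ (fderiv ℝ F) := (hF.fderiv_right (m := (⊤ : ℕ∞)) (by simp)).differentiable (by simp)
  have hA1 : ContDiff ℝ (⊤ : ℕ∞) (fun w => fderiv ℝ F w 1) :=
    (hF.fderiv_right (by simp)).clm_apply contDiff_const
  have hAI : ContDiff ℝ (⊤ : ℕ∞) (fun w => fderiv ℝ F w Complex.I) :=
    (hF.fderiv_right (by simp)).clm_apply contDiff_const
  have hHd : Differentiable ℝ (fun w => wdbar F w) := by
    have h : (fun w => wdbar F w) = fun w =>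
        (1/2 : ℂ) * (fderiv ℝ F w 1 + Complex.I * fderiv ℝ F w Complex.I) := rfl
    rw [h]
    exact (contDiff_const.mul (hA1.add (contDiff_const.mul hAI))).differentiable (by simp)
  have hKd : Differentiable ℝ (fun w => wd F w) := by
    have h : (fun w => wd F w) = fun w =>
        (1/2 : ℂ) * (fderiv ℝ F w 1 - Complex.I * fderiv ℝ F w Complex.I) := rfl
    rw [h]
    exact (contDiff_const.mul (hA1.sub (contDiff_const.mul hAI))).differentiable (by simp)
  -- second derivative at ξ
  have hev : ∀ v u : ℂ, fderiv ℝ (fun y => fderiv ℝ F y v) ξ u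
      = fderiv ℝ (fderiv ℝ F) ξ u v := by
    intro v u
    rw [fderiv_clm_apply (hAd ξ) (differentiableAt_const v)]
    simp
  have hsymm : ∀ v w : ℂ, fderiv ℝ (fderiv ℝ F) ξ v w = fderiv ℝ (fderiv ℝ F) ξ w v :=
    second_derivative_symmetric (fun y => (hFd y).hasFDerivAt) ((hAd ξ).hasFDerivAt)
  have hwdA : ∀ v : ℂ, wd (fun y => fderiv ℝ F y v) ξ
      = (1/2) * (fderiv ℝ (fderiv ℝ F) ξ 1 v
          - Complex.I * fderiv ℝ (fderiv ℝ F) ξ Complex.I v) := by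
    intro v; rw [wd, hev v 1, hev v Complex.I]
  have hwdbarA : ∀ v : ℂ, wdbar (fun y => fderiv ℝ F y v) ξ
      = (1/2) * (fderiv ℝ (fderiv ℝ F) ξ 1 v
          + Complex.I * fderiv ℝ (fderiv ℝ F) ξ Complex.I v) := by
    intro v; rw [wdbar, hev v 1, hev v Complex.I]
  have hcomm : wd (fun w => wdbar F w) ξ = wdbar (fun w => wd F w) ξ := by
    have h1 : (fun w => wdbar F w) = fun w =>
        (1/2 : ℂ) * (fderiv ℝ F w 1 + Complex.I * fderiv ℝ F w Complex.I) := rfl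
    have h2 : (fun w => wd F w) = fun w =>
        (1/2 : ℂ) * (fderiv ℝ F w 1 - Complex.I * fderiv ℝ F w Complex.I) := rfl
    have d1 : DifferentiableAt ℝ (fun w => fderiv ℝ F w 1) ξ :=
      (hA1.differentiable (by simp)) ξ
    have dI : DifferentiableAt ℝ (fun w => fderiv ℝ F w Complex.I) ξ :=
      (hAI.differentiable (by simp)) ξ
    have e1 : wd (fun w => (1/2 : ℂ) * (fderiv ℝ F w 1 + Complex.I * fderiv ℝ F w Complex.I)) ξ
        = (1/2 : ℂ) * (wd (fun w => fderiv ℝ F w 1) ξ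
            + wd (fun w => Complex.I * fderiv ℝ F w Complex.I) ξ) := by
      rw [wd_const_mul (f := fun w => fderiv ℝ F w 1 + Complex.I * fderiv ℝ F w Complex.I) _ (d1.add (dI.const_mul _)), wd_add d1 (dI.const_mul _)]
    have e2 : wd (fun w => Complex.I * fderiv ℝ F w Complex.I) ξ
        = Complex.I * wd (fun w => fderiv ℝ F w Complex.I) ξ := wd_const_mul _ dI
    have f1 : wdbar (fun w => (1/2 : ℂ) * (fderiv ℝ F w 1 - Complex.I * fderiv ℝ F w Complex.I)) ξ
        = (1/2 : ℂ) * (wdbar (fun w => fderiv ℝ F w 1) ξ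
            - wdbar (fun w => Complex.I * fderiv ℝ F w Complex.I) ξ) := by
      rw [wdbar_const_mul (f := fun w => fderiv ℝ F w 1 - Complex.I * fderiv ℝ F w Complex.I) _ (d1.sub (dI.const_mul _)), wdbar_sub d1 (dI.const_mul _)]
    have f2 : wdbar (fun w => Complex.I * fderiv ℝ F w Complex.I) ξ
        = Complex.I * wdbar (fun w => fderiv ℝ F w Complex.I) ξ := wdbar_const_mul _ dI
    rw [h1, h2, e1, e2, f1, f2, hwdA, hwdA, hwdbarA, hwdbarA, hsymm 1 Complex.I]
    ring
  -- rewrite ρ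
  have hρfun : ρ = fun z => wd F z - 2 * ((starRingEnd ℂ) z * (F z * (q z)⁻¹)) := by
    funext z
    have hfun : (fun w => F w / (((1 + Complex.normSq w) : ℝ) : ℂ) ^ 2)
        = fun w => F w * (q w * q w)⁻¹ := funext fun w => by
      rw [div_eq_mul_inv, pow_two]
    have hc : (((1 + Complex.normSq z) : ℝ) : ℂ) = q z := rfl
    rw [hρ z, hfun, wd_div_sq (hFd z) hqd hq0, hwdq z, hc]
    have := hq0 z
    field_simp
  -- rewrite LHS inner function
  have hfun1 : (fun w => (starRingEnd ℂ) (σ w) / (((1 + Complex.normSq w) : ℝ) : ℂ) ^ 2)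
      = fun w => -(wdbar F w * (q w * q w)⁻¹) := funext fun w => by
    rw [hσc w, div_eq_mul_inv, pow_two]
    ring
  have hcξ : (((1 + Complex.normSq ξ) : ℝ) : ℂ) = q ξ := rfl
  rw [hfun1, hρfun, hcξ]
  -- compute LHS
  have hL1 : wd (fun w => -(wdbar F w * (q w * q w)⁻¹)) ξ
      = -wd (fun w => wdbar F w * (q w * q w)⁻¹) ξ := wd_neg
  have hL2 : wd (fun w => wdbar F w * (q w * q w)⁻¹) ξ
      = wd (fun w => wdbar F w) ξ / q ξ ^ 2 - 2 * wd q ξ * wdbar F ξ / q ξ ^ 3 :=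
    wd_div_sq (hHd ξ) hqd hq0
  -- compute RHS
  have hqinv : DifferentiableAt ℝ (fun w => (q w)⁻¹) ξ := (hqd ξ).inv (hq0 ξ)
  have hFq : DifferentiableAt ℝ (fun z => F z * (q z)⁻¹) ξ := (hFd ξ).mul hqinv
  have hcFq : DifferentiableAt ℝ (fun z => (starRingEnd ℂ) z * (F z * (q z)⁻¹)) ξ :=
    (conj_differentiable ξ).mul hFq
  have hR1 : wdbar (fun z => wd F z - 2 * ((starRingEnd ℂ) z * (F z * (q z)⁻¹))) ξ
      = wdbar (fun z => wd F z) ξ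
        - wdbar (fun z => 2 * ((starRingEnd ℂ) z * (F z * (q z)⁻¹))) ξ :=
    wdbar_sub (hKd ξ) (hcFq.const_mul 2)
  have hR2 : wdbar (fun z => 2 * ((starRingEnd ℂ) z * (F z * (q z)⁻¹))) ξ
      = 2 * wdbar (fun z => (starRingEnd ℂ) z * (F z * (q z)⁻¹)) ξ := wdbar_const_mul 2 hcFq
  have hR3 : wdbar (fun z => (starRingEnd ℂ) z * (F z * (q z)⁻¹)) ξ
      = wdbar (fun z => (starRingEnd ℂ) z) ξ * (F ξ * (q ξ)⁻¹)
        + (starRingEnd ℂ) ξ * wdbar (fun z => F z * (q z)⁻¹) ξ :=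
    wdbar_mul (conj_differentiable ξ) hFq
  have hR4 : wdbar (fun z => F z * (q z)⁻¹) ξ
      = wdbar F ξ * (q ξ)⁻¹ + F ξ * wdbar (fun z => (q z)⁻¹) ξ := wdbar_mul (hFd ξ) hqinv
  have hR5 : wdbar (fun z => (q z)⁻¹) ξ = -wdbar q ξ / q ξ ^ 2 := wdbar_inv hqd hq0
  rw [hL1, hL2, hR1, hR2, hR3, hR4, hR5, hwdq ξ, hwdbarq ξ, wdbar_conj_id, hcomm]
  -- final algebra, using ξ * conj ξ = q ξ - 1
  have hxq : ξ * (starRingEnd ℂ) ξ = q ξ - 1 := by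
    rw [hq_eq]; ring
  have h0 := hq0 ξ
  field_simp
  linear_combination (-2 * F ξ) * hxq
end
end

section
/- An oriented line in ℝ³ with holomorphic coordinates (ξ, η) ∈ ℂ² has squared distance to the origin equal to 4ηη̄/(1+ξξ̄)². Consequently, for a purely twisting rotationally symmetric congruence with η = i√(ψ(θ)) e^{iφ}/cos²(θ/2) and ξ = tan(θ/2)e^{iφ}, this squared distance equals 4ψ(θ). -/
/-!
The squared norm of the closest point reduces to the polynomial identity
`|η - η̄ξ²|² + (ηξ̄ + η̄ξ)² = |η|²(1+|ξ|²)²`. For the twisting congruence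
`|ξ|² = tan²(θ/2)` and `|η|² = ψ / cos⁴(θ/2)`, and `1 + tan² = 1/cos²` cancels the cosines.
-/

open Real ComplexConjugate

namespace Complex

theorem normSq_sub_conj_mul_sq_add_sq_re (ξ η : ℂ) :
    normSq (η - conj η * ξ ^ 2) + (η * conj ξ + conj η * ξ).re ^ 2 =
      normSq η * (1 + normSq ξ) ^ 2 := by
  obtain ⟨a, b⟩ := ξ
  obtain ⟨c, d⟩ := η
  simp only [normSq_apply, mul_re, mul_im, sub_re, sub_im, add_re, conj_re, conj_im, pow_two]
  ring

theorem sq_norm_div_ofReal_add_sq_re_div_ofReal (z w : ℂ) (c : ℝ) :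
    ‖z / (c : ℂ)‖ ^ 2 + (w / (c : ℂ)).re ^ 2 = (normSq z + w.re ^ 2) / c ^ 2 := by
  rw [Complex.sq_norm, normSq_div, normSq_ofReal, div_ofReal_re, div_pow, add_div, sq c]

theorem normSq_exp_I_mul_ofReal (φ : ℝ) : normSq (exp (I * φ)) = 1 := by
  rw [normSq_eq_norm_sq, mul_comm, norm_exp_ofReal_mul_I, one_pow]

end Complex

open Complex in
theorem sq_dist_closestPoint (ξ η : ℂ) :
    ‖-2 * (η - conj η * ξ ^ 2) / ((1 + normSq ξ : ℝ) : ℂ) ^ 2‖ ^ 2 +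
        ((-2 * (η * conj ξ + conj η * ξ) / ((1 + normSq ξ : ℝ) : ℂ) ^ 2).re) ^ 2 =
      4 * normSq η / (1 + normSq ξ) ^ 2 := by
  have hpos : (0 : ℝ) < 1 + normSq ξ := by linarith [normSq_nonneg ξ]
  rw [← ofReal_pow, sq_norm_div_ofReal_add_sq_re_div_ofReal, normSq_mul, mul_re,
    normSq_neg, normSq_ofNat, neg_re, neg_im, re_ofNat, im_ofNat, neg_zero, zero_mul, sub_zero,
    mul_pow]
  field_simp
  linear_combination 4 * normSq_sub_conj_mul_sq_add_sq_re ξ η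

open Complex in
theorem twisting_sq_dist {θ : ℝ} (hθ₀ : 0 < θ) (hθπ : θ < π) (φ : ℝ) {ψ : ℝ} (hψ : 0 ≤ ψ) :
    4 * normSq (I * (√ψ : ℂ) * exp (I * φ) / ((Real.cos (θ / 2) : ℝ) : ℂ) ^ 2) /
        (1 + normSq ((Real.tan (θ / 2) : ℂ) * exp (I * φ))) ^ 2 = 4 * ψ := by
  have hcos : Real.cos (θ / 2) ≠ 0 :=
    (cos_pos_of_mem_Ioo ⟨by linarith [pi_pos], by linarith⟩).ne'
  have hξ : normSq ((Real.tan (θ / 2) : ℂ) * exp (I * φ)) = Real.tan (θ / 2) ^ 2 := by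
    rw [normSq_mul, normSq_exp_I_mul_ofReal, normSq_ofReal, mul_one, sq]
  have hη : normSq (I * (√ψ : ℂ) * exp (I * φ) / ((Real.cos (θ / 2) : ℝ) : ℂ) ^ 2) =
      ψ / Real.cos (θ / 2) ^ 4 := by
    rw [normSq_div, normSq_mul, normSq_mul, normSq_exp_I_mul_ofReal, normSq_I, ← ofReal_pow,
      normSq_ofReal, normSq_ofReal, mul_self_sqrt hψ]
    ring
  rw [hξ, hη, ← inv_inv (1 + _), inv_one_add_tan_sq hcos]
  field_simp

/-- The squared distance to the origin of the oriented line with holomorphic coordinates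
`(ξ, η)` is `4ηη̄/(1+ξξ̄)²`; for the purely twisting rotationally symmetric congruence
`η = i√ψ e^{iφ}/cos²(θ/2)`, `ξ = tan(θ/2)e^{iφ}`, this equals `4ψ`. -/
theorem line_distance_squared :
    (∀ ξ η : ℂ,
      let x12 : ℂ := -2 * (η - (starRingEnd ℂ) η * ξ ^ 2) / (((1 + Complex.normSq ξ) : ℝ) : ℂ) ^ 2
      let x3 : ℝ :=
        (-2 * (η * (starRingEnd ℂ) ξ + (starRingEnd ℂ) η * ξ) /
            (((1 + Complex.normSq ξ) : ℝ) : ℂ) ^ 2).re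
      ‖x12‖ ^ 2 + x3 ^ 2 = 4 * Complex.normSq η / (1 + Complex.normSq ξ) ^ 2) ∧
    (∀ θ φ ψ : ℝ, 0 < θ → θ < π → 0 ≤ ψ →
      let ξ : ℂ := (Real.tan (θ / 2) : ℂ) * Complex.exp (Complex.I * φ)
      let η : ℂ := Complex.I * (Real.sqrt ψ : ℂ) * Complex.exp (Complex.I * φ) /
        ((Real.cos (θ / 2) : ℝ) : ℂ) ^ 2
      4 * Complex.normSq η / (1 + Complex.normSq ξ) ^ 2 = 4 * ψ) :=
  ⟨sq_dist_closestPoint, fun _ φ _ hθ₀ hθπ hψ => twisting_sq_dist hθ₀ hθπ φ hψ⟩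
end

section
/- Let u : [0, θ₀] × [0, ∞) → [0, ∞) be smooth satisfying ∂u/∂t ≤ D(θ,t) u″ − u²/(2K) on the interior, where D > 0 and K > 0 is a constant, with u(0,t) = u(θ₀,t) = 0 for all t. Then u(θ, t) ≤ 2K/t for all t > 0. -/
noncomputable section

open Set Filter Topology

/-- Second derivative test: at an interior local max of a smooth function,
the second derivative is nonpositive. -/
lemma secondDeriv_nonpos_of_isLocalMax {f : ℝ → ℝ} (hf : ContDiff ℝ (⊤ : ℕ∞) f) {x : ℝ}
    (h : IsLocalMax f x) : deriv (deriv f) x ≤ 0 := by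
  by_contra hc
  push_neg at hc
  have hf2 : ContDiff ℝ (↑(⊤:ℕ∞)) f := hf.of_le (by simp)
  obtain ⟨hdiff, hf'⟩ := contDiff_infty_iff_deriv.mp hf2
  have hd0 : deriv f x = 0 := h.deriv_eq_zero
  have hder : HasDerivAt (deriv f) (deriv (deriv f) x) x :=
    ((hf'.differentiable (by simp)) x).hasDerivAt
  have hslope := hasDerivAt_iff_tendsto_slope.mp hder
  have h1 : Tendsto (slope (deriv f) x) (𝓝[>] x) (𝓝 (deriv (deriv f) x)) :=
    hslope.mono_left (nhdsWithin_mono _ (fun s hs => ne_of_gt hs))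
  have h2 : ∀ᶠ s in 𝓝[>] x, 0 < slope (deriv f) x s :=
    h1.eventually (eventually_gt_nhds hc)
  have hpos : ∀ᶠ s in 𝓝[>] x, 0 < deriv f s := by
    filter_upwards [h2, self_mem_nhdsWithin] with s hs hs'
    have hx : (0:ℝ) < s - x := sub_pos.mpr hs'
    have : slope (deriv f) x s = (deriv f s) / (s - x) := by
      rw [slope_def_field, hd0, sub_zero]
    rw [this] at hs
    have := mul_pos hs hx
    rwa [div_mul_cancel₀ _ (ne_of_gt hx)] at this
  obtain ⟨b, hb, hIoo⟩ := mem_nhdsGT_iff_exists_Ioo_subset.mp hpos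
  have hxb : x < b := hb
  have hmono : StrictMonoOn f (Icc x b) := by
    apply strictMonoOn_of_deriv_pos (convex_Icc x b) hdiff.continuous.continuousOn
    intro z hz
    rw [interior_Icc] at hz
    exact hIoo hz
  have hup : ∀ᶠ s in 𝓝[>] x, f x < f s := by
    filter_upwards [Ioo_mem_nhdsGT hxb, self_mem_nhdsWithin] with s hs hs'
    exact hmono (left_mem_Icc.mpr hxb.le) ⟨hs.1.le, hs.2.le⟩ hs'
  have hdown : ∀ᶠ s in 𝓝[>] x, f s ≤ f x := (h.filter_mono nhdsWithin_le_nhds)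
  obtain ⟨s, hs1, hs2⟩ := (hup.and hdown).exists
  exact absurd hs2 (not_le.mpr hs1)

/-- If a differentiable function attains on `[a, x]` its maximum at the right
endpoint `x`, then its derivative at `x` is nonnegative. -/
lemma deriv_nonneg_of_max_right {f : ℝ → ℝ} {a x : ℝ} (hax : a < x)
    (hf : ∀ s ∈ Set.Icc a x, f s ≤ f x) {f' : ℝ} (hd : HasDerivAt f f' x) : 0 ≤ f' := by
  have hslope := hasDerivAt_iff_tendsto_slope.mp hd
  have h1 : Tendsto (slope f x) (𝓝[<] x) (𝓝 f') :=
    hslope.mono_left (nhdsWithin_mono _ (fun s hs => ne_of_lt hs))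
  refine ge_of_tendsto h1 ?_
  filter_upwards [Ioo_mem_nhdsLT hax, self_mem_nhdsWithin] with s hs hs'
  have hnum : f s - f x ≤ 0 := sub_nonpos.mpr (hf s ⟨hs.1.le, hs.2.le⟩)
  have hden : s - x < 0 := sub_neg.mpr hs'
  rw [slope_def_field]
  exact div_nonneg_of_nonpos hnum hden.le

/-- Maximum-principle decay estimate (cf. Ecker–Huisken, Lemma 4.5): a nonnegative
subsolution of `∂u/∂t ≤ D u″ − u²/(2K)` with zero boundary values decays like `2K/t`. -/
theorem decay_estimate (θ₀ K : ℝ) (hθ₀ : 0 < θ₀) (hK : 0 < K)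
    (u D : ℝ → ℝ → ℝ)
    (hu : ContDiff ℝ (⊤ : ℕ∞) (Function.uncurry u))
    (hD : Continuous (Function.uncurry D))
    (hDpos : ∀ θ ∈ Set.Icc 0 θ₀, ∀ t : ℝ, 0 ≤ t → 0 < D θ t)
    (hnonneg : ∀ θ ∈ Set.Icc 0 θ₀, ∀ t : ℝ, 0 ≤ t → 0 ≤ u θ t)
    (hineq : ∀ θ ∈ Set.Ioo 0 θ₀, ∀ t : ℝ, 0 < t →
      deriv (fun s => u θ s) t ≤
        D θ t * deriv (fun x => deriv (fun y => u y t) x) θ - u θ t ^ 2 / (2 * K))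
    (hbdry : ∀ t : ℝ, 0 ≤ t → u 0 t = 0 ∧ u θ₀ t = 0) :
    ∀ θ ∈ Set.Icc 0 θ₀, ∀ t : ℝ, 0 < t → u θ t ≤ 2 * K / t := by
  have hucont : Continuous (Function.uncurry u) := hu.continuous
  intro θ hθ t ht
  -- Key claim: comparison with the barrier `2K/(t−a)` for every `a ∈ (0, t)`.
  have key : ∀ a : ℝ, 0 < a → a < t → u θ t ≤ 2 * K / (t - a) := by
    intro a ha hat
    -- global bound on u over [0,θ₀] × [0,t]
    obtain ⟨p, hpS, hpB⟩ := ((isCompact_Icc.prod isCompact_Icc).exists_isMaxOn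
      (Set.Nonempty.prod ⟨0, left_mem_Icc.mpr hθ₀.le⟩ ⟨0, left_mem_Icc.mpr ht.le⟩)
      hucont.continuousOn :
      ∃ p ∈ (Icc (0:ℝ) θ₀) ×ˢ (Icc (0:ℝ) t), IsMaxOn (Function.uncurry u)
        ((Icc (0:ℝ) θ₀) ×ˢ (Icc (0:ℝ) t)) p)
    set B : ℝ := u p.1 p.2 with hB
    have hBnonneg : 0 ≤ B := hnonneg p.1 hpS.1 p.2 hpS.2.1
    have hBbound : ∀ θ' ∈ Icc (0:ℝ) θ₀, ∀ t' ∈ Icc (0:ℝ) t, u θ' t' ≤ B := by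
      intro θ' hθ' t' ht'
      exact hpB (Set.mk_mem_prod hθ' ht')
    -- choose δ
    set δ : ℝ := min ((t - a) / 2) (2 * K / (B + 1)) with hδdef
    have hδpos : 0 < δ := lt_min (by linarith) (by positivity)
    have hδ1 : a + δ < t := by
      have := min_le_left ((t - a) / 2) (2 * K / (B + 1))
      have : δ ≤ (t - a) / 2 := this
      linarith
    have hδ2 : B + 1 ≤ 2 * K / δ := by
      have h1 : δ ≤ 2 * K / (B + 1) := min_le_right _ _
      have h2 : δ * (B + 1) ≤ 2 * K := by
        rw [← le_div_iff₀ (by linarith : (0:ℝ) < B + 1)]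
        exact h1
      rw [le_div_iff₀ hδpos]
      linarith [h2]
    -- the barrier
    set φ : ℝ → ℝ := fun s => 2 * K / (s - a) with hφdef
    -- maximize g = u − φ on Q
    set Q : Set (ℝ × ℝ) := (Icc (0:ℝ) θ₀) ×ˢ (Icc (a + δ) t) with hQdef
    set g : ℝ × ℝ → ℝ := fun q => u q.1 q.2 - φ q.2 with hgdef
    have hQcompact : IsCompact Q := isCompact_Icc.prod isCompact_Icc
    have hQne : Q.Nonempty := ⟨(0, t), Set.mk_mem_prod (left_mem_Icc.mpr hθ₀.le)
      (right_mem_Icc.mpr hδ1.le)⟩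
    have hgcont : ContinuousOn g Q := by
      apply ContinuousOn.sub
      · exact hucont.continuousOn
      · apply ContinuousOn.div continuousOn_const
        · exact (continuous_snd.sub continuous_const).continuousOn
        · intro q hq
          have : a + δ ≤ q.2 := hq.2.1
          have : 0 < q.2 - a := by linarith
          exact ne_of_gt this
    obtain ⟨q, hqQ, hqM⟩ := hQcompact.exists_isMaxOn hQne hgcont
    have hq1 : q.1 ∈ Icc (0:ℝ) θ₀ := hqQ.1
    have hq2 : q.2 ∈ Icc (a + δ) t := hqQ.2
    have hq2pos : 0 < q.2 := by have := hq2.1; linarith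
    have hq2a : δ ≤ q.2 - a := by have := hq2.1; linarith
    have hφpos : 0 < φ q.2 := by
      have : 0 < q.2 - a := lt_of_lt_of_le hδpos hq2a
      exact div_pos (by positivity) this
    -- It suffices to show the max of g is nonpositive
    have hM : g q ≤ 0 := by
      by_contra hMpos
      push_neg at hMpos
      -- q.2 > a + δ : on the initial slice g < 0
      have hts : a + δ < q.2 := by
        rcases eq_or_lt_of_le hq2.1 with heq | hlt
        · exfalso
          have hφδ : φ q.2 = 2 * K / δ := by rw [hφdef, ← heq]; ring_nf
          have hub : u q.1 q.2 ≤ B := hBbound q.1 hq1 q.2 ⟨hq2pos.le, hq2.2⟩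
          have : g q ≤ B - (B + 1) := by
            rw [hgdef]
            simp only
            rw [hφδ]
            linarith [hδ2]
          linarith
        · exact hlt
      -- q.1 is interior: on the lateral boundary g < 0
      have hθs : q.1 ∈ Ioo (0:ℝ) θ₀ := by
        constructor
        · rcases eq_or_lt_of_le hq1.1 with heq | hlt
          · exfalso
            have : u q.1 q.2 = 0 := by rw [← heq]; exact (hbdry q.2 hq2pos.le).1
            have : g q = -φ q.2 := by rw [hgdef]; simp only; rw [this]; ring
            rw [this] at hMpos; linarith
          · exact hlt
        · rcases eq_or_lt_of_le hq1.2 with heq | hlt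
          · exfalso
            have : u q.1 q.2 = 0 := by rw [heq]; exact (hbdry q.2 hq2pos.le).2
            have : g q = -φ q.2 := by rw [hgdef]; simp only; rw [this]; ring
            rw [this] at hMpos; linarith
          · exact hlt
      -- spatial second derivative at the max is nonpositive
      have husp : ContDiff ℝ (⊤ : ℕ∞) (fun y => u y q.2) :=
        hu.comp (contDiff_id.prodMk contDiff_const)
      have hlocmax : IsLocalMax (fun y => u y q.2) q.1 := by
        have hmem : Icc (0:ℝ) θ₀ ∈ 𝓝 q.1 := Icc_mem_nhds hθs.1 hθs.2
        filter_upwards [hmem] with y hy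
        have h1 : g (y, q.2) ≤ g q := hqM (Set.mk_mem_prod hy hq2)
        simpa [hgdef] using h1
      have hspace : deriv (deriv (fun y => u y q.2)) q.1 ≤ 0 :=
        secondDeriv_nonpos_of_isLocalMax husp hlocmax
      -- temporal derivative at the max is at least φ'
      have hut : ContDiff ℝ (⊤ : ℕ∞) (fun s => u q.1 s) :=
        hu.comp (contDiff_const.prodMk contDiff_id)
      have hdu : HasDerivAt (fun s => u q.1 s) (deriv (fun s => u q.1 s) q.2) q.2 :=
        ((hut.differentiable (by simp)) q.2).hasDerivAt
      have hra : (0:ℝ) < q.2 - a := lt_of_lt_of_le hδpos hq2a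
      have hdφ : HasDerivAt φ (-(2 * K) / (q.2 - a) ^ 2) q.2 := by
        have h1 : HasDerivAt (fun s : ℝ => s - a) 1 q.2 := (hasDerivAt_id q.2).sub_const a
        have h2 := (hasDerivAt_const q.2 (2 * K)).div h1 (ne_of_gt hra)
        convert h2 using 1
        · rfl
        · rfl
        · rfl
        · ring
      have hgt : HasDerivAt (fun s => u q.1 s - φ s)
          (deriv (fun s => u q.1 s) q.2 - -(2 * K) / (q.2 - a) ^ 2) q.2 := hdu.sub hdφ
      have hmaxt : ∀ s ∈ Icc (a + δ) q.2, u q.1 s - φ s ≤ u q.1 q.2 - φ q.2 := by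
        intro s hs
        have hsQ : (q.1, s) ∈ Q := Set.mk_mem_prod hq1 ⟨hs.1, le_trans hs.2 hq2.2⟩
        exact hqM hsQ
      have hder_nonneg : 0 ≤ deriv (fun s => u q.1 s) q.2 - -(2 * K) / (q.2 - a) ^ 2 :=
        deriv_nonneg_of_max_right hts hmaxt hgt
      -- the differential inequality at the max point
      have hDp : 0 < D q.1 q.2 := hDpos q.1 hq1 q.2 hq2pos.le
      have hineq' := hineq q.1 hθs q.2 hq2pos
      have hDu'' : D q.1 q.2 * deriv (fun x => deriv (fun y => u y q.2) x) q.1 ≤ 0 :=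
        mul_nonpos_of_nonneg_of_nonpos hDp.le hspace
      have hchain : deriv (fun s => u q.1 s) q.2 ≤ - (u q.1 q.2 ^ 2 / (2 * K)) := by
        linarith [hineq', hDu'']
      have hcontr : -(2 * K) / (q.2 - a) ^ 2 ≤ - (u q.1 q.2 ^ 2 / (2 * K)) := by
        linarith [hder_nonneg, hchain]
      -- but u(q) > φ(q.2) > 0 makes this impossible
      have hugt : 2 * K / (q.2 - a) < u q.1 q.2 := by
        have : 0 < u q.1 q.2 - φ q.2 := hMpos
        rw [hφdef] at this
        simp only at this
        linarith
      set r : ℝ := q.2 - a with hr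
      have h1 : u q.1 q.2 ^ 2 / (2 * K) ≤ 2 * K / r ^ 2 := by
        have : -(2 * K) / r ^ 2 = -(2 * K / r ^ 2) := by ring
        rw [this] at hcontr
        linarith
      have h2 : u q.1 q.2 ^ 2 * r ^ 2 ≤ 2 * K * (2 * K) := by
        have := (div_le_div_iff₀ (by positivity : (0:ℝ) < 2 * K)
          (by positivity : (0:ℝ) < r ^ 2)).mp h1
        linarith
      have h3 : 2 * K < u q.1 q.2 * r := (div_lt_iff₀ hra).mp hugt
      have h4 : 0 < u q.1 q.2 * r := lt_trans (by positivity) h3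
      nlinarith [mul_pos (sub_pos.mpr h3) (add_pos h4 (by positivity : (0:ℝ) < 2 * K))]
    -- conclude from the max being nonpositive
    have hin : (θ, t) ∈ Q := Set.mk_mem_prod hθ ⟨hδ1.le, le_refl t⟩
    have := hqM hin
    have hgθt : g (θ, t) ≤ 0 := le_trans this hM
    have : u θ t - 2 * K / (t - a) ≤ 0 := hgθt
    linarith
  -- take the limit a → 0⁺
  have hlim : Tendsto (fun a : ℝ => 2 * K / (t - a)) (𝓝[>] 0) (𝓝 (2 * K / t)) := by
    have hc : ContinuousAt (fun a : ℝ => 2 * K / (t - a)) 0 := by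
      apply ContinuousAt.div continuousAt_const
      · exact (continuous_const.sub continuous_id).continuousAt
      · simpa using ht.ne'
    have := hc.tendsto
    simp only [sub_zero] at this
    exact this.mono_left nhdsWithin_le_nhds
  refine ge_of_tendsto hlim ?_
  filter_upwards [Ioo_mem_nhdsGT ht] with a ha
  exact key a ha.1 ha.2
end
end

section
/- Let ψ₁, ψ₂ : [0, θ₀] × [0, T] → (0, ∞) be smooth solutions of ∂ψ/∂t = (√ψ/ψ′)ψ″ − √ψ cot(2θ) with ψᵢ′ > 0, satisfying ψ₁(θ, 0) < ψ₂(θ, 0) for all θ, ψ₁(θ₀, t) < ψ₂(θ₀, t) and ψ₁(0, t) < ψ₂(0, t) for all t. Then ψ₁(θ, t) < ψ₂(θ, t) throughout [0, θ₀] × [0, T] (the flowing discs remain disjoint). -/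
noncomputable section

open Real Set Filter Topology

lemma fc_hasDerivAt_fst {F : ℝ × ℝ → ℝ} (hF : ContDiff ℝ (⊤ : ℕ∞) F) (θ t : ℝ) :
    HasDerivAt (fun x => F (x, t)) (fderiv ℝ F (θ, t) (1, 0)) θ := by
  have h := (hF.differentiable (by simp) (θ, t)).hasFDerivAt
  have hline : HasDerivAt (fun x : ℝ => ((x : ℝ), t)) ((1 : ℝ), (0 : ℝ)) θ :=
    (hasDerivAt_id θ).prodMk (hasDerivAt_const θ t)
  exact h.comp_hasDerivAt θ hline

lemma fc_hasDerivAt_snd {F : ℝ × ℝ → ℝ} (hF : ContDiff ℝ (⊤ : ℕ∞) F) (θ t : ℝ) :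
    HasDerivAt (fun s => F (θ, s)) (fderiv ℝ F (θ, t) (0, 1)) t := by
  have h := (hF.differentiable (by simp) (θ, t)).hasFDerivAt
  have hline : HasDerivAt (fun s : ℝ => (θ, s)) ((0 : ℝ), (1 : ℝ)) t :=
    (hasDerivAt_const t θ).prodMk (hasDerivAt_id t)
  exact h.comp_hasDerivAt t hline

lemma fc_contDiff_pd {F : ℝ × ℝ → ℝ} (hF : ContDiff ℝ (⊤ : ℕ∞) F) (v : ℝ × ℝ) :
    ContDiff ℝ (⊤ : ℕ∞) (fun p => fderiv ℝ F p v) :=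
  (hF.fderiv_right (by simp)).clm_apply contDiff_const

lemma fc_deriv_nonpos_of_min_right {f : ℝ → ℝ} {a b d : ℝ} (hab : a < b)
    (hd : HasDerivAt f d b) (h : ∀ t ∈ Set.Ico a b, f b ≤ f t) : d ≤ 0 := by
  have hs : Filter.Tendsto (slope f b) (𝓝[<] b) (𝓝 d) :=
    (hasDerivAt_iff_tendsto_slope.mp hd).mono_left
      (nhdsWithin_mono _ (fun x hx => ne_of_lt hx))
  refine le_of_tendsto hs ?_
  filter_upwards [Ico_mem_nhdsLT hab, self_mem_nhdsWithin] with t ht ht'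
  rw [slope_def_field]
  exact div_nonpos_of_nonneg_of_nonpos (by linarith [h t ht]) (by simp at ht'; linarith)

lemma fc_second_deriv_nonneg {f : ℝ → ℝ} (hf : ContDiff ℝ (⊤ : ℕ∞) f) {x : ℝ}
    (h : IsLocalMin f x) : 0 ≤ deriv (deriv f) x := by
  by_contra hneg
  push_neg at hneg
  have hf' : ContDiff ℝ (↑(⊤ : ℕ∞)) f := hf.of_le (by simp)
  have hg : ContDiff ℝ (↑(⊤ : ℕ∞)) (deriv f) := (contDiff_infty_iff_deriv.mp hf').2
  have hgc : Continuous (deriv (deriv f)) := (contDiff_infty_iff_deriv.mp hg).2.continuous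
  obtain ⟨ε, hε, hball⟩ := Metric.isOpen_iff.mp (isOpen_Iio.preimage hgc) x hneg
  set ε' := ε / 2 with hε'
  have hε'0 : 0 < ε' := by positivity
  have hsub : Set.Icc x (x + ε') ⊆ Metric.ball x ε := by
    intro y hy
    simp only [Metric.mem_ball, Real.dist_eq, abs_sub_lt_iff]
    simp only [Set.mem_Icc] at hy
    constructor
    · linarith [hy.1, hy.2]
    · linarith [hy.1, hy.2]
  have hanti : StrictAntiOn (deriv f) (Set.Icc x (x + ε')) := by
    apply strictAntiOn_of_deriv_neg (convex_Icc _ _) (hg.continuous.continuousOn)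
    intro y hy
    rw [interior_Icc] at hy
    exact hball (hsub (Ioo_subset_Icc_self hy))
  have hd0 : deriv f x = 0 := h.deriv_eq_zero
  have hderivneg : ∀ y ∈ Set.Ioc x (x + ε'), deriv f y < 0 := by
    intro y hy
    have := hanti (Set.left_mem_Icc.2 (by linarith)) ⟨hy.1.le, hy.2⟩ hy.1
    rwa [hd0] at this
  have hfanti : StrictAntiOn f (Set.Icc x (x + ε')) := by
    apply strictAntiOn_of_deriv_neg (convex_Icc _ _) (hf.continuous.continuousOn)
    intro y hy
    rw [interior_Icc] at hy
    exact hderivneg y ⟨hy.1, hy.2.le⟩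
  obtain ⟨ε₂, hε₂, hmin⟩ := Metric.eventually_nhds_iff.mp h
  set y := x + min ε' ε₂ / 2 with hy
  have hxy : x < y := by have := lt_min hε'0 hε₂; rw [hy]; linarith
  have hylt : f y < f x :=
    hfanti (Set.left_mem_Icc.2 (by linarith)) ⟨hxy.le, by rw [hy]; linarith [min_le_left ε' ε₂]⟩ hxy
  have hdy : dist y x < ε₂ := by
    rw [Real.dist_eq, hy]
    have h1 := lt_min hε'0 hε₂
    have h2 := min_le_right ε' ε₂
    rw [abs_of_pos (by linarith)]
    linarith
  have : f x ≤ f y := hmin hdy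
  linarith

set_option maxHeartbeats 1600000 in
/-- Parabolic comparison principle for the flow `∂ψ/∂t = (√ψ/ψ′)ψ″ − √ψ cot(2θ)`:
ordered initial and boundary data remain ordered, so the flowing discs stay disjoint. -/
theorem flow_comparison (θ₀ T : ℝ) (hθ₀ : θ₀ ∈ Set.Ioo 0 (π / 2)) (hT : 0 < T)
    (ψ₁ ψ₂ : ℝ → ℝ → ℝ)
    (hψ₁ : ContDiff ℝ (⊤ : ℕ∞) (Function.uncurry ψ₁))
    (hψ₂ : ContDiff ℝ (⊤ : ℕ∞) (Function.uncurry ψ₂))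
    (hpos₁ : ∀ θ ∈ Set.Icc 0 θ₀, ∀ t ∈ Set.Icc 0 T, 0 < ψ₁ θ t)
    (hpos₂ : ∀ θ ∈ Set.Icc 0 θ₀, ∀ t ∈ Set.Icc 0 T, 0 < ψ₂ θ t)
    (hgrad₁ : ∀ θ ∈ Set.Icc 0 θ₀, ∀ t ∈ Set.Icc 0 T, 0 < deriv (fun x => ψ₁ x t) θ)
    (hgrad₂ : ∀ θ ∈ Set.Icc 0 θ₀, ∀ t ∈ Set.Icc 0 T, 0 < deriv (fun x => ψ₂ x t) θ)
    (hflow₁ : ∀ θ ∈ Set.Ioo 0 θ₀, ∀ t ∈ Set.Icc 0 T,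
      deriv (fun s => ψ₁ θ s) t =
        Real.sqrt (ψ₁ θ t) / deriv (fun x => ψ₁ x t) θ *
          deriv (fun x => deriv (fun y => ψ₁ y t) x) θ -
        Real.sqrt (ψ₁ θ t) * Real.cot (2 * θ))
    (hflow₂ : ∀ θ ∈ Set.Ioo 0 θ₀, ∀ t ∈ Set.Icc 0 T,
      deriv (fun s => ψ₂ θ s) t =
        Real.sqrt (ψ₂ θ t) / deriv (fun x => ψ₂ x t) θ *
          deriv (fun x => deriv (fun y => ψ₂ y t) x) θ -
        Real.sqrt (ψ₂ θ t) * Real.cot (2 * θ))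
    (hinit : ∀ θ ∈ Set.Icc 0 θ₀, ψ₁ θ 0 < ψ₂ θ 0)
    (hbdryR : ∀ t ∈ Set.Icc 0 T, ψ₁ θ₀ t < ψ₂ θ₀ t)
    (hbdryL : ∀ t ∈ Set.Icc 0 T, ψ₁ 0 t < ψ₂ 0 t) :
    ∀ θ ∈ Set.Icc 0 θ₀, ∀ t ∈ Set.Icc 0 T, ψ₁ θ t < ψ₂ θ t := by
  obtain ⟨hθ₀0, hθ₀π⟩ := hθ₀
  -- partial derivative functions
  set F₁ : ℝ × ℝ → ℝ := Function.uncurry ψ₁ with hF₁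
  set F₂ : ℝ × ℝ → ℝ := Function.uncurry ψ₂ with hF₂
  set G₁ : ℝ × ℝ → ℝ := fun p => fderiv ℝ F₁ p (1, 0) with hG₁def
  set G₂ : ℝ × ℝ → ℝ := fun p => fderiv ℝ F₂ p (1, 0) with hG₂def
  have hG₁s : ContDiff ℝ (⊤ : ℕ∞) G₁ := fc_contDiff_pd hψ₁ (1, 0)
  have hG₂s : ContDiff ℝ (⊤ : ℕ∞) G₂ := fc_contDiff_pd hψ₂ (1, 0)
  set H₁ : ℝ × ℝ → ℝ := fun p => fderiv ℝ G₁ p (1, 0) with hH₁def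
  set H₂ : ℝ × ℝ → ℝ := fun p => fderiv ℝ G₂ p (1, 0) with hH₂def
  have hd1 : ∀ θ t : ℝ, HasDerivAt (fun x => ψ₁ x t) (G₁ (θ, t)) θ :=
    fun θ t => fc_hasDerivAt_fst hψ₁ θ t
  have hd2 : ∀ θ t : ℝ, HasDerivAt (fun x => ψ₂ x t) (G₂ (θ, t)) θ :=
    fun θ t => fc_hasDerivAt_fst hψ₂ θ t
  have hdd1 : ∀ θ t : ℝ, deriv (fun x => deriv (fun y => ψ₁ y t) x) θ = H₁ (θ, t) := by
    intro θ t
    have he : (fun x => deriv (fun y => ψ₁ y t) x) = fun x => G₁ (x, t) :=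
      funext fun x => (hd1 x t).deriv
    rw [he]
    exact (fc_hasDerivAt_fst hG₁s θ t).deriv
  have hdd2 : ∀ θ t : ℝ, deriv (fun x => deriv (fun y => ψ₂ y t) x) θ = H₂ (θ, t) := by
    intro θ t
    have he : (fun x => deriv (fun y => ψ₂ y t) x) = fun x => G₂ (x, t) :=
      funext fun x => (hd2 x t).deriv
    rw [he]
    exact (fc_hasDerivAt_fst hG₂s θ t).deriv
  have hdt1 : ∀ θ t : ℝ, HasDerivAt (fun s => ψ₁ θ s) (fderiv ℝ F₁ (θ, t) (0, 1)) t :=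
    fun θ t => fc_hasDerivAt_snd hψ₁ θ t
  have hdt2 : ∀ θ t : ℝ, HasDerivAt (fun s => ψ₂ θ s) (fderiv ℝ F₂ (θ, t) (0, 1)) t :=
    fun θ t => fc_hasDerivAt_snd hψ₂ θ t
  -- the difference u
  set u : ℝ × ℝ → ℝ := fun p => F₂ p - F₁ p with hudef
  have hucont : Continuous u := hψ₂.continuous.sub hψ₁.continuous
  set K : Set (ℝ × ℝ) := Icc 0 θ₀ ×ˢ Icc 0 T with hKdef
  have hKc : IsCompact K := (isCompact_Icc).prod (isCompact_Icc)
  -- main claim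
  suffices hmain : ∀ p ∈ K, 0 < u p by
    intro θ hθ t ht
    have hmem : ((θ, t) : ℝ × ℝ) ∈ K := Set.mem_prod.2 ⟨hθ, ht⟩
    have h2 : u (θ, t) = ψ₂ θ t - ψ₁ θ t := rfl
    have := hmain (θ, t) hmem
    rw [h2] at this
    linarith
  by_contra hcon
  push_neg at hcon
  obtain ⟨p₀, hp₀K, hp₀⟩ := hcon
  -- the set where u ≤ 0 and the leftmost such point
  set A : Set (ℝ × ℝ) := K ∩ u ⁻¹' Iic 0 with hAdef
  have hAc : IsCompact A := hKc.inter_right (isClosed_Iic.preimage hucont)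
  have hAne : A.Nonempty := ⟨p₀, hp₀K, by simpa using hp₀⟩
  obtain ⟨pb, hpbA, hpbmin⟩ := hAc.exists_isMinOn hAne continuous_fst.continuousOn
  have hpbK : pb ∈ K := hpbA.1
  have hpbu : u pb ≤ 0 := hpbA.2
  have hpb1 : pb.1 ∈ Icc 0 θ₀ := (Set.mem_prod.1 hpbK).1
  have hpb2 : pb.2 ∈ Icc 0 T := (Set.mem_prod.1 hpbK).2
  set θm : ℝ := pb.1 with hθmdef
  have hθm0 : 0 < θm := by
    rcases lt_or_eq_of_le hpb1.1 with h | h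
    · exact h
    · exfalso
      have h2 : u pb = ψ₂ θm pb.2 - ψ₁ θm pb.2 := rfl
      rw [h2, ← h] at hpbu
      linarith [hbdryL pb.2 hpb2]
  -- strip positivity
  have hstrip : ∀ p ∈ K, p.1 < θm → 0 < u p := by
    intro p hpK hp1
    by_contra hup
    push_neg at hup
    exact absurd (hpbmin (⟨hpK, by simpa using hup⟩ : p ∈ A)) (not_le.2 hp1)
  set θ₁ : ℝ := θm / 2 with hθ₁def
  have hθ₁pos : 0 < θ₁ := by positivity
  have hθ₁ltθm : θ₁ < θm := by rw [hθ₁def]; linarith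
  have hθ₁leθ₀ : θ₁ ≤ θ₀ := by
    have := hpb1.2; rw [hθ₁def]; linarith [hθm0]
  set K' : Set (ℝ × ℝ) := Icc θ₁ θ₀ ×ˢ Icc 0 T with hK'def
  have hK'c : IsCompact K' := (isCompact_Icc).prod (isCompact_Icc)
  have hK'K : K' ⊆ K := Set.prod_mono (Icc_subset_Icc hθ₁pos.le le_rfl) le_rfl
  have hK'ne : K'.Nonempty := ⟨(θ₁, 0), Set.mem_prod.2 ⟨⟨le_rfl, hθ₁leθ₀⟩, ⟨le_rfl, hT.le⟩⟩⟩
  -- minimum of ψ₁ over K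
  have hKne : K.Nonempty := ⟨(0, 0), Set.mem_prod.2 ⟨⟨le_rfl, hθ₀0.le⟩, ⟨le_rfl, hT.le⟩⟩⟩
  obtain ⟨pm, hpmK, hpm⟩ := hKc.exists_isMinOn hKne hψ₁.continuous.continuousOn
  set m₀ : ℝ := F₁ pm with hm₀def
  have hm₀pos : 0 < m₀ :=
    hpos₁ pm.1 (Set.mem_prod.1 hpmK).1 pm.2 (Set.mem_prod.1 hpmK).2
  have hm₀le : ∀ p ∈ K, m₀ ≤ F₁ p := fun p hp => hpm hp
  -- bound M for |H₂/G₂ - cot(2θ)| on K'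
  have hG₂pos : ∀ p ∈ K, 0 < G₂ p := by
    intro p hpK
    have := hgrad₂ p.1 (Set.mem_prod.1 hpK).1 p.2 (Set.mem_prod.1 hpK).2
    rwa [(hd2 p.1 p.2).deriv] at this
  set φ : ℝ × ℝ → ℝ := fun p => |H₂ p / G₂ p - Real.cot (2 * p.1)| with hφdef
  have hφcont : ContinuousOn φ K' := by
    apply ContinuousOn.abs
    apply ContinuousOn.sub
    · exact ((fc_contDiff_pd hG₂s (1, 0)).continuous.continuousOn).div
        hG₂s.continuous.continuousOn
        (fun p hp => (hG₂pos p (hK'K hp)).ne')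
    · have heq : ∀ p ∈ K', Real.cos (2 * p.1) / Real.sin (2 * p.1) = Real.cot (2 * p.1) :=
        fun p _ => (Real.cot_eq_cos_div_sin _).symm
      apply ContinuousOn.congr _ fun p hp => (heq p hp).symm
      apply ContinuousOn.div
      · exact (Real.continuous_cos.comp (continuous_const.mul continuous_fst)).continuousOn
      · exact (Real.continuous_sin.comp (continuous_const.mul continuous_fst)).continuousOn
      · intro p hp
        have hp1 := (Set.mem_prod.1 hp).1
        have h2θ : 0 < 2 * p.1 := by linarith [hθ₁pos, hp1.1]
        have h2θ' : 2 * p.1 < π := by linarith [hp1.2, hθ₀π]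
        exact (Real.sin_pos_of_pos_of_lt_pi h2θ h2θ').ne'
  obtain ⟨pM, hpMK', hpM⟩ := hK'c.exists_isMaxOn hK'ne hφcont
  set M : ℝ := φ pM with hMdef
  have hMnonneg : 0 ≤ M := abs_nonneg _
  set C : ℝ := M / (2 * Real.sqrt m₀) + 1 with hCdef
  have hsqm₀ : 0 < Real.sqrt m₀ := Real.sqrt_pos.2 hm₀pos
  have hCpos : 0 < C := by
    rw [hCdef]; positivity
  -- parabolic boundary of K'
  set P : Set (ℝ × ℝ) :=
    (Icc θ₁ θ₀ ×ˢ {(0 : ℝ)}) ∪ ({θ₁} ×ˢ Icc 0 T) ∪ ({θ₀} ×ˢ Icc 0 T) with hPdef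
  have hPc : IsCompact P :=
    ((isCompact_Icc.prod isCompact_singleton).union
      (isCompact_singleton.prod isCompact_Icc)).union
      (isCompact_singleton.prod isCompact_Icc)
  have hPne : P.Nonempty :=
    ⟨(θ₁, 0), Or.inl (Or.inl (Set.mem_prod.2 ⟨⟨le_rfl, hθ₁leθ₀⟩, rfl⟩))⟩
  have hPK : P ⊆ K := by
    intro p hp
    rcases hp with (hp | hp) | hp
    · obtain ⟨h1, h2⟩ := Set.mem_prod.1 hp
      refine Set.mem_prod.2 ⟨⟨by linarith [h1.1, hθ₁pos], h1.2⟩, ?_⟩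
      simp only [Set.mem_singleton_iff] at h2
      rw [h2]
      exact ⟨le_rfl, hT.le⟩
    · obtain ⟨h1, h2⟩ := Set.mem_prod.1 hp
      simp only [Set.mem_singleton_iff] at h1
      exact Set.mem_prod.2 ⟨by rw [h1]; exact ⟨hθ₁pos.le, hθ₁leθ₀⟩, h2⟩
    · obtain ⟨h1, h2⟩ := Set.mem_prod.1 hp
      simp only [Set.mem_singleton_iff] at h1
      exact Set.mem_prod.2 ⟨by rw [h1]; exact ⟨hθ₀0.le, le_rfl⟩, h2⟩
  have huP : ∀ p ∈ P, 0 < u p := by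
    intro p hp
    rcases hp with (hp | hp) | hp
    · obtain ⟨h1, h2⟩ := Set.mem_prod.1 hp
      simp only [Set.mem_singleton_iff] at h2
      have h3 : u p = ψ₂ p.1 p.2 - ψ₁ p.1 p.2 := rfl
      rw [h3, h2]
      linarith [hinit p.1 ⟨by linarith [h1.1, hθ₁pos], h1.2⟩]
    · obtain ⟨h1, h2⟩ := Set.mem_prod.1 hp
      simp only [Set.mem_singleton_iff] at h1
      exact hstrip p (hPK (Or.inl (Or.inr hp))) (by rw [h1]; exact hθ₁ltθm)
    · obtain ⟨h1, h2⟩ := Set.mem_prod.1 hp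
      simp only [Set.mem_singleton_iff] at h1
      have h3 : u p = ψ₂ p.1 p.2 - ψ₁ p.1 p.2 := rfl
      rw [h3, h1]
      linarith [hbdryR p.2 h2]
  obtain ⟨pP, hpPP, hpPmin⟩ := hPc.exists_isMinOn hPne hucont.continuousOn
  set m₂ : ℝ := u pP with hm₂def
  have hm₂pos : 0 < m₂ := huP pP hpPP
  set δ : ℝ := m₂ / 2 with hδdef
  have hδpos : 0 < δ := by positivity
  -- the barrier function v
  set v : ℝ × ℝ → ℝ := fun p => u p - δ * Real.exp (-C * p.2) with hvdef
  have hvcont : Continuous v := by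
    apply hucont.sub
    exact continuous_const.mul ((continuous_const.mul continuous_snd).rexp)
  have hP2 : ∀ p ∈ P, (0 : ℝ) ≤ p.2 := by
    intro p hp
    rcases hp with (hp | hp) | hp
    · have h2 := (Set.mem_prod.1 hp).2; simp at h2; simp [h2]
    · exact (Set.mem_prod.1 hp).2.1
    · exact (Set.mem_prod.1 hp).2.1
  have hvP : ∀ p ∈ P, 0 < v p := by
    intro p hp
    have h1 : m₂ ≤ u p := hpPmin hp
    have h2 : Real.exp (-C * p.2) ≤ 1 := by
      rw [Real.exp_le_one_iff]
      have := hP2 p hp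
      exact mul_nonpos_iff.mpr (Or.inr ⟨neg_nonpos.mpr hCpos.le, this⟩)
    have : δ * Real.exp (-C * p.2) ≤ δ := by
      have h3 := mul_le_mul_of_nonneg_left h2 hδpos.le
      simpa using h3
    show 0 < u p - δ * Real.exp (-C * p.2)
    have h4 : δ * Real.exp (-C * p.2) ≤ δ := this
    have h5 : δ < m₂ := by rw [hδdef]; linarith
    linarith
  -- core: v > 0 on K'
  have hvK' : ∀ p ∈ K', 0 < v p := by
    by_contra hcon2
    push_neg at hcon2
    obtain ⟨p', hp'K', hp'⟩ := hcon2
    -- first touching time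
    set B : Set (ℝ × ℝ) := K' ∩ v ⁻¹' Iic 0 with hBdef
    have hBc : IsCompact B := hK'c.inter_right (isClosed_Iic.preimage hvcont)
    have hBne : B.Nonempty := ⟨p', hp'K', by simpa using hp'⟩
    set S : Set ℝ := Prod.snd '' B with hSdef
    have hSc : IsCompact S := hBc.image continuous_snd
    have hSne : S.Nonempty := hBne.image _
    set ts : ℝ := sInf S with htsdef
    have htsS : ts ∈ S := hSc.sInf_mem hSne
    obtain ⟨pt, hptB, hpt2⟩ := htsS
    set θs : ℝ := pt.1 with hθsdef
    have hptK' : pt ∈ K' := hptB.1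
    have hθsI : θs ∈ Icc θ₁ θ₀ := (Set.mem_prod.1 hptK').1
    have htsI : ts ∈ Icc 0 T := hpt2 ▸ (Set.mem_prod.1 hptK').2
    have hvpt : v (θs, ts) ≤ 0 := by
      have h := hptB.2
      simp only [Set.mem_preimage, Set.mem_Iic] at h
      have hpe : ((θs, ts) : ℝ × ℝ) = pt := by rw [hθsdef, ← hpt2]
      rwa [hpe]
    -- before ts the barrier is positive
    have hlow : ∀ θ ∈ Icc θ₁ θ₀, ∀ t ∈ Icc 0 T, t < ts → 0 < v (θ, t) := by
      intro θ hθ t ht htlt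
      by_contra hle
      push_neg at hle
      have : t ∈ S := ⟨(θ, t), ⟨Set.mem_prod.2 ⟨hθ, ht⟩, by simpa using hle⟩, rfl⟩
      exact absurd (csInf_le hSc.bddBelow this) (not_le.2 htlt)
    have htspos : 0 < ts := by
      rcases lt_or_eq_of_le htsI.1 with h | h
      · exact h
      · exfalso
        have hmem : ((θs : ℝ), (0 : ℝ)) ∈ P :=
          Or.inl (Or.inl (Set.mem_prod.2 ⟨hθsI, rfl⟩))
        have h2 := hvP _ hmem
        have h3 : v (θs, ts) = v (θs, 0) := by rw [← h]
        linarith [hvpt, h3 ▸ hvpt]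
    -- at time ts the barrier is still nonnegative
    have hv0 : ∀ θ ∈ Icc θ₁ θ₀, 0 ≤ v (θ, ts) := by
      intro θ hθ
      have hg : Filter.Tendsto (fun t => v (θ, t)) (𝓝[<] ts) (𝓝 (v (θ, ts))) :=
        ((hvcont.comp (continuous_const.prodMk continuous_id)).tendsto ts).mono_left
          nhdsWithin_le_nhds
      refine ge_of_tendsto hg ?_
      filter_upwards [Ico_mem_nhdsLT htspos] with t ht
      exact (hlow θ hθ t ⟨ht.1, le_trans ht.2.le htsI.2⟩ ht.2).le
    have hvts : v (θs, ts) = 0 := le_antisymm hvpt (hv0 θs hθsI)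
    -- θs is interior
    have hθsne1 : θs ≠ θ₁ := by
      intro h
      have hmem : ((θ₁ : ℝ), ts) ∈ P := Or.inl (Or.inr (Set.mem_prod.2 ⟨rfl, htsI⟩))
      have := hvP _ hmem
      rw [← h, hvts] at this
      exact lt_irrefl _ this
    have hθsne2 : θs ≠ θ₀ := by
      intro h
      have hmem : ((θ₀ : ℝ), ts) ∈ P := Or.inr (Set.mem_prod.2 ⟨rfl, htsI⟩)
      have := hvP _ hmem
      rw [← h, hvts] at this
      exact lt_irrefl _ this
    have hθsIoo : θs ∈ Ioo θ₁ θ₀ :=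
      ⟨lt_of_le_of_ne hθsI.1 (Ne.symm hθsne1), lt_of_le_of_ne hθsI.2 hθsne2⟩
    -- the section in θ at time ts
    set f : ℝ → ℝ := fun y => v (y, ts) with hfdef
    have hfsmooth : ContDiff ℝ (⊤ : ℕ∞) f := by
      have h1 : ContDiff ℝ (⊤ : ℕ∞) (fun y : ℝ => F₂ (y, ts)) :=
        hψ₂.comp (contDiff_id.prodMk contDiff_const)
      have h2 : ContDiff ℝ (⊤ : ℕ∞) (fun y : ℝ => F₁ (y, ts)) :=
        hψ₁.comp (contDiff_id.prodMk contDiff_const)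
      have h3 : ContDiff ℝ (⊤ : ℕ∞) (fun y : ℝ => F₂ (y, ts) - F₁ (y, ts) - δ * Real.exp (-C * ts)) :=
        (h1.sub h2).sub contDiff_const
      exact h3
    have hloc : IsLocalMin f θs := by
      have hnb : Ioo θ₁ θ₀ ∈ 𝓝 θs := isOpen_Ioo.mem_nhds hθsIoo
      filter_upwards [hnb] with y hy
      show v (θs, ts) ≤ v (y, ts)
      rw [hvts]
      exact hv0 y (Ioo_subset_Icc_self hy)
    -- first derivative in θ vanishes
    have hfd : ∀ y : ℝ, HasDerivAt f (G₂ (y, ts) - G₁ (y, ts)) y := by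
      intro y
      have h1 := hd2 y ts
      have h2 := hd1 y ts
      have h3 := (h1.sub h2).sub_const (δ * Real.exp (-C * ts))
      exact h3
    have hderivf : deriv f = fun y => G₂ (y, ts) - G₁ (y, ts) :=
      funext fun y => (hfd y).deriv
    have hG0 : G₂ (θs, ts) = G₁ (θs, ts) := by
      have h := hloc.deriv_eq_zero
      rw [hderivf] at h
      have h2 : G₂ (θs, ts) - G₁ (θs, ts) = 0 := h
      linarith
    -- second derivative in θ nonneg
    have hf2 : 0 ≤ H₂ (θs, ts) - H₁ (θs, ts) := by
      have h := fc_second_deriv_nonneg hfsmooth hloc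
      rw [hderivf] at h
      have he : deriv (fun y => G₂ (y, ts) - G₁ (y, ts)) θs = H₂ (θs, ts) - H₁ (θs, ts) :=
        ((fc_hasDerivAt_fst hG₂s θs ts).sub (fc_hasDerivAt_fst hG₁s θs ts)).deriv
      rwa [he] at h
    -- time derivative at ts is ≤ 0
    set E : ℝ := δ * Real.exp (-C * ts) with hEdef
    have hEpos : 0 < E := by
      rw [hEdef]
      exact mul_pos hδpos (Real.exp_pos _)
    have hgd : HasDerivAt (fun s => v (θs, s))
        (fderiv ℝ F₂ (θs, ts) (0, 1) - fderiv ℝ F₁ (θs, ts) (0, 1) + δ * C * Real.exp (-C * ts)) ts := by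
      have h1 := hdt2 θs ts
      have h2 := hdt1 θs ts
      have h3 : HasDerivAt (fun s : ℝ => δ * Real.exp (-C * s))
          (δ * (Real.exp (-C * ts) * -C)) ts := by
        have h := (((hasDerivAt_id ts).const_mul (-C)).exp).const_mul δ
        simpa only [id_eq, mul_one] using h
      have h4 := (h1.sub h2).sub h3
      have h5 : fderiv ℝ F₂ (θs, ts) (0, 1) - fderiv ℝ F₁ (θs, ts) (0, 1)
          + δ * C * Real.exp (-C * ts)
          = fderiv ℝ F₂ (θs, ts) (0, 1) - fderiv ℝ F₁ (θs, ts) (0, 1)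
            - δ * (Real.exp (-C * ts) * -C) := by ring
      rw [h5]
      exact h4
    have hdtle : fderiv ℝ F₂ (θs, ts) (0, 1) - fderiv ℝ F₁ (θs, ts) (0, 1)
        + δ * C * Real.exp (-C * ts) ≤ 0 := by
      apply fc_deriv_nonpos_of_min_right htspos hgd
      intro t ht
      have h1 : (0 : ℝ) < v (θs, t) :=
        hlow θs hθsI t ⟨ht.1, le_trans ht.2.le htsI.2⟩ ht.2
      show v (θs, ts) ≤ v (θs, t)
      rw [hvts]
      exact h1.le
    -- now use the equations
    have hθsIoo0 : θs ∈ Ioo 0 θ₀ := ⟨lt_trans hθ₁pos hθsIoo.1, hθsIoo.2⟩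
    have heq1 := hflow₁ θs hθsIoo0 ts htsI
    have heq2 := hflow₂ θs hθsIoo0 ts htsI
    rw [(hdt1 θs ts).deriv, (hd1 θs ts).deriv, hdd1 θs ts] at heq1
    rw [(hdt2 θs ts).deriv, (hd2 θs ts).deriv, hdd2 θs ts] at heq2
    set a : ℝ := ψ₁ θs ts with hadef
    set b : ℝ := ψ₂ θs ts with hbdef
    set q₁ : ℝ := H₁ (θs, ts) with hq₁def
    set q₂ : ℝ := H₂ (θs, ts) with hq₂def
    set c : ℝ := Real.cot (2 * θs) with hcdef
    set pp : ℝ := G₁ (θs, ts) with hppdef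
    have hmemK' : ((θs : ℝ), ts) ∈ K' := Set.mem_prod.2 ⟨hθsI, htsI⟩
    have hptsK : ((θs : ℝ), ts) ∈ K := hK'K hmemK'
    have hppos : 0 < pp := by
      have h := hgrad₁ θs ⟨le_trans hθ₁pos.le hθsI.1, hθsI.2⟩ ts htsI
      rw [(hd1 θs ts).deriv] at h
      rw [hppdef]
      exact h
    have hapos : 0 < a := hpos₁ θs ⟨le_trans hθ₁pos.le hθsI.1, hθsI.2⟩ ts htsI
    have ham₀ : m₀ ≤ a := hm₀le (θs, ts) hptsK
    have hba : b - a = E := by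
      have h : v (θs, ts) = (b - a) - E := rfl
      rw [h] at hvts
      linarith
    have hbpos : 0 < b := by rw [← sub_add_cancel b a, hba]; linarith
    have hq12 : q₁ ≤ q₂ := by linarith [hf2]
    have hMbound : |q₂ / pp - c| ≤ M := by
      have h := hpM hmemK'
      rw [← hG0]
      exact h
    -- sqrt estimates
    have hsa : 0 < Real.sqrt a := Real.sqrt_pos.2 hapos
    have hsb : 0 < Real.sqrt b := Real.sqrt_pos.2 hbpos
    have hsab : Real.sqrt a ≤ Real.sqrt b :=
      Real.sqrt_le_sqrt (by linarith)
    have hsm₀a : Real.sqrt m₀ ≤ Real.sqrt a := Real.sqrt_le_sqrt ham₀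
    have hsq : (Real.sqrt b - Real.sqrt a) * (Real.sqrt b + Real.sqrt a) = E := by
      have h1 : Real.sqrt a * Real.sqrt a = a := Real.mul_self_sqrt hapos.le
      have h2 : Real.sqrt b * Real.sqrt b = b := Real.mul_self_sqrt hbpos.le
      linear_combination h2 - h1 + hba
    have hdiffnn : 0 ≤ Real.sqrt b - Real.sqrt a := by linarith
    have hdiff : Real.sqrt b - Real.sqrt a ≤ E / (2 * Real.sqrt m₀) := by
      have hmul : (Real.sqrt b - Real.sqrt a) * (2 * Real.sqrt m₀)
          ≤ (Real.sqrt b - Real.sqrt a) * (Real.sqrt b + Real.sqrt a) :=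
        mul_le_mul_of_nonneg_left (by linarith) hdiffnn
      rw [le_div_iff₀ (by linarith [hsqm₀] : (0:ℝ) < 2 * Real.sqrt m₀)]
      linarith [hsq, hmul]
    -- the flow difference identity
    have hkey : fderiv ℝ F₂ (θs, ts) (0, 1) - fderiv ℝ F₁ (θs, ts) (0, 1) =
        (Real.sqrt b - Real.sqrt a) * (q₂ / pp - c) + Real.sqrt a / pp * (q₂ - q₁) := by
      rw [heq1, heq2, ← hG0]
      field_simp
      ring
    clear_value a b q₁ q₂ c pp E M C m₀ δ m₂
    -- the contradiction
    have habs : -M ≤ q₂ / pp - c := neg_le_of_abs_le hMbound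
    have hmul1 := mul_le_mul_of_nonneg_left habs hdiffnn
    have hmul2 := mul_le_mul_of_nonneg_right hdiff hMnonneg
    have h1 : -(E / (2 * Real.sqrt m₀)) * M ≤ (Real.sqrt b - Real.sqrt a) * (q₂ / pp - c) := by
      linarith [hmul1, hmul2]
    have h2 : 0 ≤ Real.sqrt a / pp * (q₂ - q₁) :=
      mul_nonneg (div_nonneg hsa.le hppos.le) (by linarith)
    have hCE : δ * C * Real.exp (-C * ts) = C * E := by rw [hEdef]; ring
    have hM2 : E / (2 * Real.sqrt m₀) * M = E * (C - 1) := by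
      have hne : Real.sqrt m₀ ≠ 0 := ne_of_gt hsqm₀
      rw [hCdef]
      field_simp
      ring
    rw [hkey, hCE] at hdtle
    linarith [h1, h2, hdtle, hEpos, hM2]
  -- conclude: pb lies in K', contradiction
  have hpbK' : pb ∈ K' := Set.mem_prod.2 ⟨⟨by rw [hθ₁def]; linarith [hθm0], hpb1.2⟩, hpb2⟩
  have := hvK' pb hpbK'
  have hexp : 0 < δ * Real.exp (-C * pb.2) := by positivity
  have hfin : v pb = u pb - δ * Real.exp (-C * pb.2) := rfl
  rw [hfin] at this
  linarith
end
end
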